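/- Let Y₁,…,Y_m be independent real random variables that are centered (E[Y_j] = 0) and have fourth moments E[Y_j⁴] ≤ B, and let x ∈ ℝ^m be a unit vector. Then E[(Σ_{j=1}^m Y_j x_j)⁴] ≤ 48·B. -/

import Mathlib

/-!
For independent centered `Z_j`, expanding `(∑ Z_j)⁴` and taking expectations kills every term
containing some `Z_j` to the first power, so `E (∑ Z_j)⁴ ≤ ∑ E Z_j⁴ + 3 (∑ E Z_j²)²`; adding
one variable at a time, this is the binomial expansion of `E (S + Z)⁴` for independent `S`, `Z`.
For `Z_j = x_j Y_j` both terms are at most `B`: `∑ x_j⁴ ≤ (∑ x_j²)² = 1`, and Cauchy–Schwarz gives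
`(∑ x_j² E Y_j²)² ≤ ∑ x_j² (E Y_j²)² ≤ B` since `(E Y_j²)² ≤ E Y_j⁴`. Hence the bound `4 B ≤ 48 B`.
-/

open MeasureTheory ProbabilityTheory Finset

section

variable {Ω : Type*} [MeasurableSpace Ω] {μ : Measure Ω}

lemma MeasureTheory.MemLp.integrable_pow_of_le [IsFiniteMeasure μ] {f : Ω → ℝ} {n k : ℕ}
    (hf : MemLp f n μ) (hk : k ≤ n) : Integrable (fun ω ↦ f ω ^ k) μ := by
  have hfk : MemLp f k μ := hf.mono_exponent (by exact_mod_cast hk)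
  refine (integrable_norm_iff (hf.aestronglyMeasurable.pow k)).mp ?_
  simpa only [Pi.pow_apply, norm_pow] using hfk.integrable_norm_pow'

lemma sq_integral_sq_le_integral_pow_four [IsProbabilityMeasure μ] {f : Ω → ℝ}
    (hf : MemLp f 4 μ) : (∫ ω, f ω ^ 2 ∂μ) ^ 2 ≤ ∫ ω, f ω ^ 4 ∂μ := by
  have hf2 : MemLp (fun ω ↦ f ω ^ 2) 2 μ := by
    refine (memLp_two_iff_integrable_sq (hf.aestronglyMeasurable.pow 2)).mpr ?_
    simpa only [Pi.pow_apply, ← pow_mul] using hf.integrable_pow_of_le (k := 4) (n := 4) le_rfl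
  have hvar := variance_nonneg (fun ω ↦ f ω ^ 2) μ
  rw [variance_eq_sub hf2] at hvar
  simp only [Pi.pow_apply, ← pow_mul] at hvar
  linarith

lemma Finset.sum_mul_pow_four_le_of_sum_sq_eq_one {ι : Type*} (s : Finset ι) {a x : ι → ℝ}
    {B : ℝ} (hB : 0 ≤ B) (ha : ∀ j ∈ s, a j ≤ B) (hx : ∑ j ∈ s, x j ^ 2 = 1) :
    ∑ j ∈ s, a j * x j ^ 4 ≤ B :=
  calc ∑ j ∈ s, a j * x j ^ 4 ≤ ∑ j ∈ s, B * (x j ^ 2) ^ 2 :=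
        sum_le_sum fun j hj ↦ by rw [← pow_mul]; gcongr; exact ha j hj
    _ ≤ B * (∑ j ∈ s, x j ^ 2) ^ 2 := by
        rw [← mul_sum]; gcongr; exact sum_sq_le_sq_sum_of_nonneg fun j _ ↦ sq_nonneg _
    _ = B := by rw [hx, one_pow, mul_one]

lemma Finset.sq_sum_mul_sq_le_of_sum_sq_eq_one {ι : Type*} (s : Finset ι) {a x : ι → ℝ}
    {B : ℝ} (ha : ∀ j ∈ s, a j ^ 2 ≤ B) (hx : ∑ j ∈ s, x j ^ 2 = 1) :
    (∑ j ∈ s, a j * x j ^ 2) ^ 2 ≤ B :=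
  calc (∑ j ∈ s, a j * x j ^ 2) ^ 2 = (∑ j ∈ s, x j * (x j * a j)) ^ 2 := by
        congr 1; exact sum_congr rfl fun j _ ↦ by ring
    _ ≤ (∑ j ∈ s, x j ^ 2) * ∑ j ∈ s, (x j * a j) ^ 2 := sum_mul_sq_le_sq_mul_sq _ _ _
    _ ≤ 1 * ∑ j ∈ s, x j ^ 2 * B := by
        rw [hx]; gcongr with j hj; rw [mul_pow]; gcongr; exact ha j hj
    _ = B := by rw [← sum_mul, hx, one_mul, one_mul]

namespace ProbabilityTheory

lemma IndepFun.integral_add_pow [IsFiniteMeasure μ] {f g : Ω → ℝ} (hfg : IndepFun f g μ)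
    {n : ℕ} (hf : MemLp f n μ) (hg : MemLp g n μ) :
    ∫ ω, (f ω + g ω) ^ n ∂μ =
      ∑ k ∈ range (n + 1), (∫ ω, f ω ^ k ∂μ) * (∫ ω, g ω ^ (n - k) ∂μ) * n.choose k := by
  have hindep (k : ℕ) : IndepFun (fun ω ↦ f ω ^ k) (fun ω ↦ g ω ^ (n - k)) μ :=
    hfg.comp (measurable_id.pow_const k) (measurable_id.pow_const (n - k))
  have hint : ∀ k ∈ range (n + 1),
      Integrable (fun ω ↦ f ω ^ k * g ω ^ (n - k) * n.choose k) μ := fun k hk ↦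
    ((hindep k).integrable_mul (hf.integrable_pow_of_le (Nat.lt_succ_iff.mp (mem_range.mp hk)))
      (hg.integrable_pow_of_le (Nat.sub_le n k))).mul_const _
  simp_rw [add_pow]
  rw [integral_finsetSum _ hint]
  refine sum_congr rfl fun k _ ↦ ?_
  rw [integral_mul_const, (hindep k).integral_fun_mul_eq_mul_integral
    (hf.aestronglyMeasurable.pow k) (hg.aestronglyMeasurable.pow (n - k))]

lemma iIndepFun.indepFun_fun_finsetSum_of_notMem {ι : Type*} {Z : ι → Ω → ℝ} (hZ : iIndepFun Z μ)
    (hmeas : ∀ j, AEMeasurable (Z j) μ) {s : Finset ι} {a : ι} (ha : a ∉ s) :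
    IndepFun (fun ω ↦ ∑ j ∈ s, Z j ω) (Z a) μ := by
  simpa only [Finset.sum_fn] using hZ.indepFun_finsetSum_of_notMem₀ hmeas ha

variable [IsProbabilityMeasure μ] {f g : Ω → ℝ} {ι : Type*} {Z : ι → Ω → ℝ}

lemma IndepFun.integral_add_sq_of_integral_eq_zero (hfg : IndepFun f g μ)
    (hf : MemLp f 2 μ) (hg : MemLp g 2 μ) (hf0 : ∫ ω, f ω ∂μ = 0) (hg0 : ∫ ω, g ω ∂μ = 0) :
    ∫ ω, (f ω + g ω) ^ 2 ∂μ = ∫ ω, f ω ^ 2 ∂μ + ∫ ω, g ω ^ 2 ∂μ := by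
  rw [hfg.integral_add_pow (n := 2) (by exact_mod_cast hf) (by exact_mod_cast hg)]
  simp [sum_range_succ, hf0, hg0, add_comm]

lemma IndepFun.integral_add_pow_four_of_integral_eq_zero (hfg : IndepFun f g μ)
    (hf : MemLp f 4 μ) (hg : MemLp g 4 μ) (hf0 : ∫ ω, f ω ∂μ = 0) (hg0 : ∫ ω, g ω ∂μ = 0) :
    ∫ ω, (f ω + g ω) ^ 4 ∂μ =
      ∫ ω, f ω ^ 4 ∂μ + 6 * (∫ ω, f ω ^ 2 ∂μ) * (∫ ω, g ω ^ 2 ∂μ) + ∫ ω, g ω ^ 4 ∂μ := by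
  rw [hfg.integral_add_pow (n := 4) (by exact_mod_cast hf) (by exact_mod_cast hg)]
  simp only [Nat.reduceAdd, sum_range_succ, range_one, sum_singleton, pow_zero, integral_const,
    probReal_univ, smul_eq_mul, mul_one, tsub_zero, one_mul, Nat.choose, Nat.cast_one, pow_one, hf0,
    Nat.add_one_sub_one, zero_mul, add_zero, Nat.cast_ofNat, Nat.reduceSub, hg0, mul_zero, tsub_self]
  ring

lemma iIndepFun.integral_sum_sq (hZ : iIndepFun Z μ) (h2 : ∀ j, MemLp (Z j) 2 μ)
    (h0 : ∀ j, ∫ ω, Z j ω ∂μ = 0) (s : Finset ι) :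
    ∫ ω, (∑ j ∈ s, Z j ω) ^ 2 ∂μ = ∑ j ∈ s, ∫ ω, Z j ω ^ 2 ∂μ := by
  classical
  induction s using Finset.induction_on with
  | empty => simp
  | insert a s ha ih =>
    have hindep := hZ.indepFun_fun_finsetSum_of_notMem (fun j ↦ (h2 j).aemeasurable) ha
    simp_rw [sum_insert ha]
    rw [hindep.symm.integral_add_sq_of_integral_eq_zero (h2 a) (memLp_finsetSum s fun j _ ↦ h2 j)
      (h0 a) (by rw [integral_finsetSum s fun j _ ↦ (h2 j).integrable one_le_two]; simp [h0]),
      ih, add_comm]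

lemma iIndepFun.integral_sum_pow_four_le (hZ : iIndepFun Z μ) (h4 : ∀ j, MemLp (Z j) 4 μ)
    (h0 : ∀ j, ∫ ω, Z j ω ∂μ = 0) (s : Finset ι) :
    ∫ ω, (∑ j ∈ s, Z j ω) ^ 4 ∂μ ≤
      ∑ j ∈ s, ∫ ω, Z j ω ^ 4 ∂μ + 3 * (∑ j ∈ s, ∫ ω, Z j ω ^ 2 ∂μ) ^ 2 := by
  classical
  have h2 (j : ι) : MemLp (Z j) 2 μ := (h4 j).mono_exponent (by norm_num)
  induction s using Finset.induction_on with
  | empty => simp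
  | insert a s ha ih =>
    have hindep := hZ.indepFun_fun_finsetSum_of_notMem (fun j ↦ (h4 j).aemeasurable) ha
    have hsum0 : ∫ ω, ∑ j ∈ s, Z j ω ∂μ = 0 := by
      rw [integral_finsetSum s fun j _ ↦ (h4 j).integrable (by norm_num)]
      simp [h0]
    simp_rw [sum_insert ha]
    rw [hindep.symm.integral_add_pow_four_of_integral_eq_zero
      (h4 a) (memLp_finsetSum s fun j _ ↦ h4 j) (h0 a) hsum0, hZ.integral_sum_sq h2 h0]
    have hsq_a : 0 ≤ ∫ ω, Z a ω ^ 2 ∂μ := integral_nonneg fun ω ↦ sq_nonneg _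
    have hsq_s : 0 ≤ ∑ j ∈ s, ∫ ω, Z j ω ^ 2 ∂μ :=
      sum_nonneg fun j _ ↦ integral_nonneg fun ω ↦ sq_nonneg _
    nlinarith

end ProbabilityTheory

end

theorem fourth_moment_khinchine_bound_general
    (m : ℕ) (B : ℝ) (hB : 0 ≤ B)
    (Ω : Type*) [MeasurableSpace Ω] (μ : Measure Ω) [IsProbabilityMeasure μ]
    (Y : Fin m → Ω → ℝ)
    (hindep : iIndepFun Y μ)
    (hL4 : ∀ j, MemLp (Y j) 4 μ)
    (hcentered : ∀ j, ∫ ω, Y j ω ∂μ = 0)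
    (hfourth : ∀ j, ∫ ω, (Y j ω) ^ 4 ∂μ ≤ B)
    (x : Fin m → ℝ) (hx : ∑ j, (x j) ^ 2 = 1) :
    ∫ ω, (∑ j, Y j ω * x j) ^ 4 ∂μ ≤ 48 * B := by
  have hmoment (n : ℕ) (j : Fin m) :
      ∫ ω, (Y j ω * x j) ^ n ∂μ = (∫ ω, Y j ω ^ n ∂μ) * x j ^ n := by
    simp_rw [mul_pow]
    exact integral_mul_const _ _
  have hZ : iIndepFun (fun j ω ↦ Y j ω * x j) μ :=
    hindep.comp (fun j t ↦ t * x j) fun j ↦ measurable_mul_const _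
  have hkhinchine := hZ.integral_sum_pow_four_le (fun j ↦ (hL4 j).mul_const (x j))
    (fun j ↦ by simpa [hcentered] using hmoment 1 j) univ
  simp only [hmoment] at hkhinchine
  have hquartic := univ.sum_mul_pow_four_le_of_sum_sq_eq_one hB (fun j _ ↦ hfourth j) hx
  have hquadratic := univ.sq_sum_mul_sq_le_of_sum_sq_eq_one
    (fun j _ ↦ (sq_integral_sq_le_integral_pow_four (hL4 j)).trans (hfourth j)) hx
  linarith

/-- If `Y₁,…,Y_m` are independent centered real random variables
with fourth moments at most `B`, and `x ∈ ℝ^m` is a unit vector, then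
`E[(Σⱼ Yⱼ xⱼ)⁴] ≤ 48 B`. -/
theorem fourth_moment_khinchine_bound
    (m : ℕ) (hm : 0 < m) (B : ℝ) (hB : 0 ≤ B)
    (Ω : Type*) [MeasurableSpace Ω] (μ : Measure Ω) [IsProbabilityMeasure μ]
    (Y : Fin m → Ω → ℝ)
    (hmeas : ∀ j, Measurable (Y j))
    (hindep : iIndepFun Y μ)
    (hL4 : ∀ j, MemLp (Y j) 4 μ)
    (hcentered : ∀ j, ∫ ω, Y j ω ∂μ = 0)
    (hfourth : ∀ j, ∫ ω, (Y j ω) ^ 4 ∂μ ≤ B)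
    (x : Fin m → ℝ) (hx : ∑ j, (x j) ^ 2 = 1) :
    ∫ ω, (∑ j, Y j ω * x j) ^ 4 ∂μ ≤ 48 * B :=
  fourth_moment_khinchine_bound_general m B hB Ω μ Y hindep hL4 hcentered hfourth x hx
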